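/- Every bi-infinite binary word avoiding the factors 11, 1001, and 0000 can be written as the z-image of a bi-infinite binary word, where z is the morphism 0→01, 1→00. Equivalently, any such bi-infinite word is an element of the two-sided infinite concatenation closure of {01, 00} (up to shift). -/
import Mathlib

/-- `u` is a factor of the bi-infinite word `w : ℤ → α`. -/
def FactorZ {α : Type*} (w : ℤ → α) (u : List α) : Prop :=
  ∃ i : ℤ, ∀ k : ℕ, (h : k < u.length) → u[k]'h = w (i + k)

/-- The morphism z: 0→01, 1→00. -/
def zMorph : Fin 2 → List (Fin 2) := ![[0,1], [0,0]]

private lemma fin2 (x : Fin 2) : x = 0 ∨ x = 1 := by omega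

private lemma not11' (w : ℤ → Fin 2) (h11 : ¬ FactorZ w [1,1]) :
    ∀ i : ℤ, w i = 1 → w (i+1) = 0 := by
  intro i hi
  rcases fin2 (w (i+1)) with h | h
  · exact h
  · refine absurd ⟨i, fun k hk => ?_⟩ h11
    simp only [List.length_cons, List.length_nil] at hk
    interval_cases k <;> simp_all

private lemma step (w : ℤ → Fin 2) (h11 : ¬ FactorZ w [1,1])
    (h1001 : ¬ FactorZ w [1,0,0,1]) (h0000 : ¬ FactorZ w [0,0,0,0]) :
    ∀ i : ℤ, w i = 1 → w (i+2) = 1 ∨ (w (i+2) = 0 ∧ w (i+3) = 0 ∧ w (i+4) = 1) := by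
  intro i hi
  have h1 : w (i+1) = 0 := not11' w h11 i hi
  rcases fin2 (w (i+2)) with h2 | h2
  · right
    rcases fin2 (w (i+3)) with h3 | h3
    · rcases fin2 (w (i+4)) with h4 | h4
      · exfalso
        refine h0000 ⟨i+1, fun k hk => ?_⟩
        simp only [List.length_cons, List.length_nil] at hk
        have e1 : i + 1 + ((1:ℕ):ℤ) = i + 2 := by push_cast; ring
        have e2 : i + 1 + ((2:ℕ):ℤ) = i + 3 := by push_cast; ring
        have e3 : i + 1 + ((3:ℕ):ℤ) = i + 4 := by push_cast; ring
        interval_cases k <;> simp_all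
      · exact ⟨h2, h3, h4⟩
    · exfalso
      refine h1001 ⟨i, fun k hk => ?_⟩
      simp only [List.length_cons, List.length_nil] at hk
      have e1 : i + ((1:ℕ):ℤ) = i + 1 := by push_cast; ring
      have e2 : i + ((2:ℕ):ℤ) = i + 2 := by push_cast; ring
      have e3 : i + ((3:ℕ):ℤ) = i + 3 := by push_cast; ring
      interval_cases k <;> simp_all
  · left; exact h2

private lemma parity (w : ℤ → Fin 2) (h11 : ¬ FactorZ w [1,1])
    (h1001 : ¬ FactorZ w [1,0,0,1]) (h0000 : ¬ FactorZ w [0,0,0,0]) :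
    ∀ n : ℕ, ∀ i : ℤ, w i = 1 → w (i + n) = 1 → Even n := by
  intro n
  induction n using Nat.strong_induction_on with
  | _ n ih =>
    intro i hi hj
    match n, hj with
    | 0, _ => exact Even.zero
    | 1, hj =>
      have h := not11' w h11 i hi
      rw [show i + ((1:ℕ):ℤ) = i + 1 by push_cast; ring, h] at hj
      exact absurd hj (by decide)
    | (m+2), hj =>
      rcases step w h11 h1001 h0000 i hi with h2 | ⟨h2, h3, h4⟩
      · have hj' : w ((i+2) + (m:ℤ)) = 1 := by
          rw [show (i+2) + (m:ℤ) = i + ((m+2 : ℕ) : ℤ) by push_cast; ring]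
          exact hj
        rcases ih m (by omega) (i+2) h2 hj' with ⟨r, hr⟩
        exact ⟨r+1, by omega⟩
      · match m with
        | 0 =>
          rw [show i + ((0+2:ℕ):ℤ) = i + 2 by push_cast; ring, h2] at hj
          exact absurd hj (by decide)
        | 1 =>
          rw [show i + ((1+2:ℕ):ℤ) = i + 3 by push_cast; ring, h3] at hj
          exact absurd hj (by decide)
        | (k+2) =>
          have hj' : w ((i+4) + (k:ℤ)) = 1 := by
            rw [show (i+4) + (k:ℤ) = i + ((k+2+2 : ℕ) : ℤ) by push_cast; ring]
            exact hj
          rcases ih k (by omega) (i+4) h4 hj' with ⟨r, hr⟩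
          exact ⟨r+2, by omega⟩

theorem factor_over_z_image (w : ℤ → Fin 2)
    (h11 : ¬ FactorZ w [1,1]) (h1001 : ¬ FactorZ w [1,0,0,1])
    (h0000 : ¬ FactorZ w [0,0,0,0]) :
    ∃ (v : ℤ → Fin 2) (c : ℤ),
      ∀ n : ℤ, [w (c + 2*n), w (c + 2*n + 1)] = zMorph (v n) := by
  -- there is a 1 somewhere
  have hex : ∃ i : ℤ, w i = 1 := by
    by_contra h
    push_neg at h
    have hz : ∀ i : ℤ, w i = 0 := fun i => (fin2 (w i)).resolve_right (h i)
    refine h0000 ⟨0, fun k hk => ?_⟩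
    simp only [List.length_cons, List.length_nil] at hk
    interval_cases k <;> simp_all
  obtain ⟨i0, hi0⟩ := hex
  -- every position of opposite parity to i0 is 0
  have hzero : ∀ m : ℤ, w (i0 + 1 + 2*m) = 0 := by
    intro m
    rcases fin2 (w (i0 + 1 + 2*m)) with h | h
    · exact h
    · exfalso
      rcases le_or_gt 0 (1 + 2*m) with hm | hm
      · have hn : i0 + (((1 + 2*m).toNat : ℕ) : ℤ) = i0 + 1 + 2*m := by omega
        rcases parity w h11 h1001 h0000 (1 + 2*m).toNat i0 hi0 (by rw [hn]; exact h) with ⟨r, hr⟩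
        omega
      · have hn : (i0 + 1 + 2*m) + (((-(1 + 2*m)).toNat : ℕ) : ℤ) = i0 := by omega
        rcases parity w h11 h1001 h0000 (-(1 + 2*m)).toNat (i0 + 1 + 2*m) h
          (by rw [hn]; exact hi0) with ⟨r, hr⟩
        omega
  refine ⟨fun n => if w (i0 + 1 + 2*n + 1) = 0 then 1 else 0, i0 + 1, fun n => ?_⟩
  have h0 : w (i0 + 1 + 2*n) = 0 := hzero n
  rcases fin2 (w (i0 + 1 + 2*n + 1)) with h | h <;> simp [h0, h, zMorph]
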